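/- Let L, L_*, L_0, L_1 be four Lagrangian subspaces of a 2n-dimensional real symplectic vector space (V,ω), with L_0 and L_1 complementary to each other, L complementary to L_0, and L_* complementary to both L and L_0. Then n_+(φ_{L_1,L_0}(L_*) − φ_{L_1,L_0}(L)) = n_+(φ_{L_0,L_*}(L)), and the symmetric bilinear form φ_{L_1,L_0}(L_*) − φ_{L_1,L_0}(L) on L_1 is nondegenerate. -/
import Mathlib


noncomputable section

/-- `B` is negative definite on the subspace `W`. -/
def negDefOn {M : Type*} [AddCommGroup M] [Module ℝ M]
    (B : M → M → ℝ) (W : Submodule ℝ M) : Prop :=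
  ∀ v ∈ W, v ≠ 0 → B v v < 0

def hasNegIdxOn {M : Type*} [AddCommGroup M] [Module ℝ M]
    (B : M → M → ℝ) (S : Set M) (m : ℕ) : Prop :=
  (∃ W : Submodule ℝ M, (W : Set M) ⊆ S ∧ negDefOn B W ∧ Module.rank ℝ W = m) ∧
  (∀ W : Submodule ℝ M, (W : Set M) ⊆ S → negDefOn B W → Module.rank ℝ W ≤ m)

def hasPosIdxOn {M : Type*} [AddCommGroup M] [Module ℝ M]
    (B : M → M → ℝ) (S : Set M) (m : ℕ) : Prop :=
  hasNegIdxOn (fun x y => - B x y) S m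

/-- `L` is a Lagrangian subspace of the `2n`-dimensional symplectic space `(V, ω)`:
an `n`-dimensional subspace on which `ω` vanishes identically. -/
def IsLagrangian {V : Type*} [AddCommGroup V] [Module ℝ V]
    (ω : V →ₗ[ℝ] V →ₗ[ℝ] ℝ) (n : ℕ) (L : Submodule ℝ V) : Prop :=
  (∀ x ∈ L, ∀ y ∈ L, ω x y = 0) ∧ Module.finrank ℝ L = n


lemma exists_hasNegIdxOn {M : Type*} [AddCommGroup M] [Module ℝ M] [FiniteDimensional ℝ M]
    (B : M → M → ℝ) : ∃ m : ℕ, hasNegIdxOn B Set.univ m := by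
  set s : Set ℕ := {m | ∃ W : Submodule ℝ M, negDefOn B W ∧ Module.rank ℝ W = m} with hs
  have h0 : (0 : ℕ) ∈ s := by
    refine ⟨⊥, fun v hv hv0 => absurd ((Submodule.mem_bot ℝ).mp hv) hv0, by simp⟩
  have hbdd : BddAbove s := by
    refine ⟨Module.finrank ℝ M, fun m hm => ?_⟩
    obtain ⟨W, _, hW⟩ := hm
    have := Submodule.rank_le W
    rw [hW, ← Module.finrank_eq_rank ℝ M] at this
    exact_mod_cast this
  obtain ⟨W, hW, hWr⟩ := Nat.sSup_mem ⟨0, h0⟩ hbdd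
  refine ⟨sSup s, ⟨W, Set.subset_univ _, hW, hWr⟩, fun W' _ hW' => ?_⟩
  have hr : Module.rank ℝ W' = (Module.finrank ℝ W' : Cardinal) :=
    (Module.finrank_eq_rank ℝ W').symm
  rw [hr]
  exact_mod_cast le_csSup hbdd ⟨W', hW', hr⟩

universe u

lemma hasNegIdxOn_transfer {M N : Type u} [AddCommGroup M] [Module ℝ M]
    [AddCommGroup N] [Module ℝ N] (e : M ≃ₗ[ℝ] N)
    (B : M → M → ℝ) (B' : N → N → ℝ) (h : ∀ x y, B' (e x) (e y) = B x y)
    (m : ℕ) (hm : hasNegIdxOn B Set.univ m) : hasNegIdxOn B' Set.univ m := by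
  obtain ⟨⟨W, -, hWneg, hWr⟩, hub⟩ := hm
  constructor
  · refine ⟨W.map e.toLinearMap, Set.subset_univ _, ?_, ?_⟩
    · rintro v hv hv0
      obtain ⟨w, hw, rfl⟩ := hv
      have hw0 : w ≠ 0 := fun h0 => hv0 (by simp [h0])
      simpa [h] using hWneg w hw hw0
    · exact (e.submoduleMap W).rank_eq.symm.trans hWr
  · intro W' _ hW'
    have hneg : negDefOn B (W'.map e.symm.toLinearMap) := by
      rintro v hv hv0
      obtain ⟨w, hw, rfl⟩ := hv
      have hw0 : w ≠ 0 := fun h0 => hv0 (by simp [h0])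
      rw [← h]
      simpa using hW' w hw hw0
    have h1 := hub (W'.map e.symm.toLinearMap) (Set.subset_univ _) hneg
    rwa [← (e.symm.submoduleMap W').rank_eq] at h1

/-- Let `L, L_*, L₀, L₁` be Lagrangian subspaces of a `2n`-dimensional real symplectic
space `(V, ω)`, with `L₀, L₁` complementary, `L` complementary to `L₀`, `L_*`
complementary to both `L` and `L₀`.  In terms of the linear maps `T, S_* : L₁ → L₀` whose
graphs in `L₁ ⊕ L₀` are `L`, `L_*` and the map `U : L₀ → L_*` whose graph in `L₀ ⊕ L_*`
is `L`, the symmetric bilinear forms `φ_{L₁,L₀}(L_*) − φ_{L₁,L₀}(L) : (u,u') ↦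
ω(S_* u, u') − ω(T u, u')` on `L₁` and `φ_{L₀,L_*}(L) : (z,z') ↦ ω(U z, z')` on `L₀`
have the same coindex `n₊`, and the first is nondegenerate. -/
theorem coindex_of_lagrangian_chart_difference
    {V : Type*} [AddCommGroup V] [Module ℝ V] [FiniteDimensional ℝ V]
    (n : ℕ) (hV : Module.finrank ℝ V = 2 * n)
    (ω : V →ₗ[ℝ] V →ₗ[ℝ] ℝ)
    (halt : ∀ x : V, ω x x = 0)
    (hnd : ∀ x : V, (∀ y : V, ω x y = 0) → x = 0)
    (L Lst L₀ L₁ : Submodule ℝ V)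
    (hL : IsLagrangian ω n L) (hLst : IsLagrangian ω n Lst)
    (hL₀ : IsLagrangian ω n L₀) (hL₁ : IsLagrangian ω n L₁)
    (hcompl01 : IsCompl L₀ L₁)
    (hcomplL0 : IsCompl L L₀)
    (hcomplstL : IsCompl Lst L)
    (hcomplst0 : IsCompl Lst L₀)
    (T : L₁ →ₗ[ℝ] L₀)
    (hT : ∀ x : V, x ∈ L ↔ ∃ u : L₁, x = (u : V) + (T u : V))
    (Sst : L₁ →ₗ[ℝ] L₀)
    (hSst : ∀ x : V, x ∈ Lst ↔ ∃ u : L₁, x = (u : V) + (Sst u : V))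
    (U : L₀ →ₗ[ℝ] V)
    (hUrange : ∀ z : L₀, U z ∈ Lst)
    (hU : ∀ x : V, x ∈ L ↔ ∃ z : L₀, x = (z : V) + U z) :
    -- `n₊(φ_{L₁,L₀}(L_*) − φ_{L₁,L₀}(L)) = n₊(φ_{L₀,L_*}(L))` …
    (∃ m : ℕ,
      hasPosIdxOn (fun u u' : L₁ => ω (Sst u : V) (u' : V) - ω (T u : V) (u' : V))
        Set.univ m ∧
      hasPosIdxOn (fun z z' : L₀ => ω (U z) (z' : V)) Set.univ m) ∧
    -- … and `φ_{L₁,L₀}(L_*) − φ_{L₁,L₀}(L)` is nondegenerate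
    (∀ u : L₁, (∀ u' : L₁, ω (Sst u : V) (u' : V) - ω (T u : V) (u' : V) = 0) →
      u = 0) := by
  -- the key identity : U (T u - Sst u) = u + Sst u
  have hUkey : ∀ u : L₁, U (T u - Sst u) = (u : V) + (Sst u : V) := by
    intro u
    have hmemL : ((u : V) + (T u : V)) ∈ L := (hT _).mpr ⟨u, rfl⟩
    obtain ⟨z, hz⟩ := (hU _).mp hmemL
    have h1 : ((T u : V) - (Sst u : V)) - (z : V) = U z - ((u : V) + (Sst u : V)) := by
      rw [sub_eq_sub_iff_add_eq_add]
      calc ((T u : V) - (Sst u : V)) + ((u : V) + (Sst u : V))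
          = (u : V) + (T u : V) := by abel
        _ = (z : V) + U z := hz
        _ = U z + (z : V) := add_comm _ _
    have hmem0 : ((T u : V) - (Sst u : V)) - (z : V) ∈ L₀ :=
      sub_mem (sub_mem (T u).2 (Sst u).2) z.2
    have hmemst : ((T u : V) - (Sst u : V)) - (z : V) ∈ Lst := by
      rw [h1]
      exact sub_mem (hUrange z) ((hSst _).mpr ⟨u, rfl⟩)
    have h0 : ((T u : V) - (Sst u : V)) - (z : V) = 0 := by
      have := hcomplst0.disjoint.le_bot ⟨hmemst, hmem0⟩
      simpa using this
    have hzz : z = T u - Sst u := by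
      apply Subtype.ext
      have := sub_eq_zero.mp h0
      simpa [eq_comm] using this.symm
    rw [← hzz]
    have h2 := h1
    rw [h0] at h2
    exact (sub_eq_zero.mp h2.symm)
  -- injectivity of T - Sst
  have hfinj : Function.Injective (T - Sst) := by
    rw [← LinearMap.ker_eq_bot]
    rw [Submodule.eq_bot_iff]
    intro u hu
    have hu' : T u - Sst u = 0 := by
      simpa [LinearMap.sub_apply] using hu
    have h3 : (0 : V) = (u : V) + (Sst u : V) := by
      rw [← hUkey u, hu', map_zero]
    have hmem1 : (u : V) ∈ L₀ := by
      have : (u : V) = -(Sst u : V) := by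
        rw [eq_neg_iff_add_eq_zero]; exact h3.symm
      rw [this]; exact neg_mem (Sst u).2
    have : (u : V) = 0 := by
      have := hcompl01.disjoint.le_bot ⟨hmem1, u.2⟩
      simpa using this
    exact Subtype.ext this
  -- the linear equivalence
  have hdim : Module.finrank ℝ L₁ = Module.finrank ℝ L₀ := by rw [hL₁.2, hL₀.2]
  let e : L₁ ≃ₗ[ℝ] L₀ := LinearMap.linearEquivOfInjective (T - Sst) hfinj hdim
  have he : ∀ u : L₁, e u = T u - Sst u := fun u => rfl
  -- skew-symmetry relations
  have hskewT : ∀ u u' : L₁, ω (u : V) (T u' : V) = - ω (T u : V) (u' : V) := by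
    intro u u'
    have h4 := hL.1 _ ((hT _).mpr ⟨u, rfl⟩) _ ((hT _).mpr ⟨u', rfl⟩)
    have h5 : ω (u : V) (u' : V) = 0 := hL₁.1 _ u.2 _ u'.2
    have h6 : ω (T u : V) (T u' : V) = 0 := hL₀.1 _ (T u).2 _ (T u').2
    simp only [map_add, LinearMap.add_apply] at h4
    linarith
  have hskewS : ∀ u u' : L₁, ω (u : V) (Sst u' : V) = - ω (Sst u : V) (u' : V) := by
    intro u u'
    have h4 := hLst.1 _ ((hSst _).mpr ⟨u, rfl⟩) _ ((hSst _).mpr ⟨u', rfl⟩)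
    have h5 : ω (u : V) (u' : V) = 0 := hL₁.1 _ u.2 _ u'.2
    have h6 : ω (Sst u : V) (Sst u' : V) = 0 := hL₀.1 _ (Sst u).2 _ (Sst u').2
    simp only [map_add, LinearMap.add_apply] at h4
    linarith
  -- compatibility of the two forms under e
  have hcompat : ∀ u u' : L₁,
      ω (U (e u)) ((e u' : L₀) : V) =
        ω (Sst u : V) (u' : V) - ω (T u : V) (u' : V) := by
    intro u u'
    rw [he u, he u', hUkey u]
    have hc : ((T u' - Sst u' : L₀) : V) = (T u' : V) - (Sst u' : V) := rfl
    rw [hc]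
    have h6 : ω (Sst u : V) (T u' : V) = 0 := hL₀.1 _ (Sst u).2 _ (T u').2
    have h7 : ω (Sst u : V) (Sst u' : V) = 0 := hL₀.1 _ (Sst u).2 _ (Sst u').2
    have h8 := hskewT u u'
    have h9 := hskewS u u'
    simp only [map_add, map_sub, LinearMap.add_apply, LinearMap.sub_apply]
    linarith
  constructor
  · obtain ⟨m, hm⟩ := exists_hasNegIdxOn
      (fun u u' : L₁ => -(ω (Sst u : V) (u' : V) - ω (T u : V) (u' : V)))
    refine ⟨m, hm, ?_⟩
    exact hasNegIdxOn_transfer e _ _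
      (fun u u' => by simp only [] ; rw [hcompat u u']) m hm
  · intro u hu
    have hw : ∀ y : V, ω ((Sst u : V) - (T u : V)) y = 0 := by
      intro y
      obtain ⟨z, hz, y', hy', hzy⟩ := Submodule.mem_sup.mp
        (hcompl01.sup_eq_top ▸ Submodule.mem_top (x := y))
      have hz0 : ω ((Sst u : V) - (T u : V)) z = 0 := by
        have := hL₀.1 _ (sub_mem (Sst u).2 (T u).2) _ hz
        simpa using this
      have hy0 : ω ((Sst u : V) - (T u : V)) y' = 0 := by
        have := hu ⟨y', hy'⟩
        simp only [map_sub, LinearMap.sub_apply]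
        simpa using this
      rw [← hzy, map_add]
      simp only [map_sub, LinearMap.sub_apply] at hz0 hy0 ⊢
      linarith
    have h10 : (Sst u : V) - (T u : V) = 0 := hnd _ hw
    have h11 : T u - Sst u = 0 := by
      apply Subtype.ext
      have := sub_eq_zero.mp h10
      simp [← this]
    have := hfinj (a₁ := u) (a₂ := 0) (by simpa [LinearMap.sub_apply] using h11)
    exact this


end
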